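/- Let P be a Poisson n-Lie algebra and I, J ideals of P (ideals for both the associative product and the n-Lie bracket). If I and J are solvable ideals (I^{(s)} = 0 and J^{(t)} = 0 for some s,t, where the derived series is K^{(1)}=K, K^{(k+1)} = [K^{(k)},K^{(k)},P,…,P] + K^{(k)}·K^{(k)}), then I + J is a solvable ideal. -/
import Mathlib


/-- Span of brackets with first entry in `S` and second entry in `T`. -/
def bk2 (F : Type*) {P : Type*} [Field F] [CommRing P] [Algebra F P] {m : ℕ}
    (br : (Fin (m + 2) → P) → P) (S T : Submodule F P) : Submodule F P :=
  Submodule.span F {z | ∃ x : Fin (m + 2) → P, x 0 ∈ S ∧ x 1 ∈ T ∧ z = br x}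

/-- An ideal of a Poisson `n`-Lie algebra: closed under multiplication by `P`
and under brackets with one entry in the ideal. -/
def IsPoissonIdeal (F : Type*) {P : Type*} [Field F] [CommRing P] [Algebra F P]
    {m : ℕ} (br : (Fin (m + 2) → P) → P) (I : Submodule F P) : Prop :=
  (∀ a ∈ I, ∀ p : P, a * p ∈ I) ∧
    ∀ x : Fin (m + 2) → P, x 0 ∈ I → br x ∈ I

/-- Derived series of an ideal `I` relative to `P` (0-indexed:
`dsI I k = I^{(k+1)}`). -/
def dsI (F : Type*) {P : Type*} [Field F] [CommRing P] [Algebra F P] {m : ℕ}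
    (br : (Fin (m + 2) → P) → P) (I : Submodule F P) : ℕ → Submodule F P
  | 0 => I
  | k + 1 => bk2 F br (dsI F br I k) (dsI F br I k) ⊔ dsI F br I k * dsI F br I k

section helpers

variable {F P : Type*} [Field F] [CommRing P] [Algebra F P] {m : ℕ}
  (br : AlternatingMap F P P (Fin (m + 2)))

lemma fin01 : (0 : Fin (m + 2)) ≠ 1 := by
  simp [Fin.ext_iff]

/-- brackets with second entry in an ideal land in the ideal. -/
lemma br_mem_of_snd {J : Submodule F P} (hJ : IsPoissonIdeal F (⇑br) J)
    {x : Fin (m + 2) → P} (hx : x 1 ∈ J) : br x ∈ J := by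
  have hs : br (x ∘ Equiv.swap (0 : Fin (m + 2)) 1) = -br x := br.map_swap x fin01
  have h0 : (x ∘ Equiv.swap (0 : Fin (m + 2)) 1) 0 ∈ J := by
    simpa [Equiv.swap_apply_left] using hx
  have := hJ.2 _ h0
  rw [hs] at this
  simpa using J.neg_mem this

lemma bk2_le {A B K : Submodule F P}
    (h : ∀ x : Fin (m + 2) → P, x 0 ∈ A → x 1 ∈ B → br x ∈ K) :
    bk2 F (⇑br) A B ≤ K := by
  apply Submodule.span_le.2
  rintro z ⟨x, h0, h1, rfl⟩
  exact h x h0 h1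

lemma bk2_mono {A A' B B' : Submodule F P} (hA : A ≤ A') (hB : B ≤ B') :
    bk2 F (⇑br) A B ≤ bk2 F (⇑br) A' B' := by
  apply Submodule.span_mono
  rintro z ⟨x, h0, h1, rfl⟩
  exact ⟨x, hA h0, hB h1, rfl⟩

lemma dsI_mono {A B : Submodule F P} (h : A ≤ B) (k : ℕ) :
    dsI F (⇑br) A k ≤ dsI F (⇑br) B k := by
  induction k with
  | zero => exact h
  | succ k ih =>
      exact sup_le_sup (bk2_mono br ih ih) (mul_le_mul' ih ih)

lemma dsI_add (A : Submodule F P) (a b : ℕ) :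
    dsI F (⇑br) A (a + b) = dsI F (⇑br) (dsI F (⇑br) A a) b := by
  induction b with
  | zero => rfl
  | succ b ih => show dsI F (⇑br) A (a + b + 1) = _; rw [dsI, ih]; rfl

/-- key inclusion: `(I ⊔ J)^{(k)} ≤ I^{(k)} ⊔ J`. -/
lemma dsI_sup_le {I J : Submodule F P} (hJ : IsPoissonIdeal F (⇑br) J) (k : ℕ) :
    dsI F (⇑br) (I ⊔ J) k ≤ dsI F (⇑br) I k ⊔ J := by
  induction k with
  | zero => exact le_rfl
  | succ k ih =>
      set A := dsI F (⇑br) I k with hA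
      refine le_trans (sup_le_sup (bk2_mono br ih ih) (mul_le_mul' ih ih)) ?_
      have hbk : bk2 F (⇑br) (A ⊔ J) (A ⊔ J) ≤ bk2 F (⇑br) A A ⊔ J := by
        apply bk2_le
        intro x h0 h1
        obtain ⟨a, ha, j, hj, hsum⟩ := Submodule.mem_sup.1 h0
        obtain ⟨a', ha', j', hj', hsum'⟩ := Submodule.mem_sup.1 h1
        have ex : x = Function.update x 0 (a + j) := by
          rw [hsum, Function.update_eq_self]
        set y := Function.update x 0 a with hy
        have hy1 : y 1 = a' + j' := by
          rw [hy, Function.update_of_ne (Ne.symm fin01), ← hsum']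
        have split0 : br x = br y + br (Function.update x 0 j) := by
          conv_lhs => rw [ex]
          exact br.map_update_add x 0 a j
        have split1 : br y = br (Function.update y 1 a') + br (Function.update y 1 j') := by
          conv_lhs => rw [show y = Function.update y 1 (a' + j') by
            rw [← hy1, Function.update_eq_self]]
          exact br.map_update_add y 1 a' j'
        rw [split0, split1]
        refine Submodule.add_mem _ (Submodule.add_mem _ ?_ ?_) ?_
        · refine Submodule.mem_sup_left (Submodule.subset_span ?_)
          refine ⟨_, ?_, ?_, rfl⟩
          · rw [Function.update_of_ne fin01, hy, Function.update_self]
            exact ha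
          · rw [Function.update_self]; exact ha'
        · refine Submodule.mem_sup_right (br_mem_of_snd br hJ ?_)
          rw [Function.update_self]; exact hj'
        · refine Submodule.mem_sup_right (hJ.2 _ ?_)
          rw [Function.update_self]; exact hj
      have hmul : (A ⊔ J) * (A ⊔ J) ≤ A * A ⊔ J := by
        rw [Submodule.mul_le]
        intro u hu v hv
        obtain ⟨a, ha, j, hj, rfl⟩ := Submodule.mem_sup.1 hu
        obtain ⟨a', ha', j', hj', rfl⟩ := Submodule.mem_sup.1 hv
        have expand : (a + j) * (a' + j') = a * a' + (j' * a + (j * a' + j * j')) := by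
          ring
        rw [expand]
        refine Submodule.add_mem _
          (Submodule.mem_sup_left (Submodule.mul_mem_mul ha ha'))
          (Submodule.mem_sup_right ?_)
        exact Submodule.add_mem _ (hJ.1 _ hj' _)
          (Submodule.add_mem _ (hJ.1 _ hj _) (hJ.1 _ hj _))
      calc bk2 F (⇑br) (A ⊔ J) (A ⊔ J) ⊔ (A ⊔ J) * (A ⊔ J)
          ≤ (bk2 F (⇑br) A A ⊔ J) ⊔ (A * A ⊔ J) := sup_le_sup hbk hmul
        _ ≤ (bk2 F (⇑br) A A ⊔ A * A) ⊔ J := by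
            rw [sup_sup_sup_comm, sup_idem]

end helpers

/-- The sum of two solvable ideals of a Poisson `n`-Lie algebra is a solvable
ideal. -/
theorem sum_solvable_ideals_solvable
    (F P : Type*) [Field F] [CommRing P] [Algebra F P] (m : ℕ)
    (br : AlternatingMap F P P (Fin (m + 2)))
    (hFI : ∀ (x : Fin (m + 1) → P) (y : Fin (m + 2) → P),
      br (Fin.snoc x (br y)) =
        ∑ i, br (Function.update y i (br (Fin.snoc x (y i)))))
    (hLeib : ∀ (u v : P) (x : Fin (m + 1) → P),
      br (Fin.cons (u * v) x) = u * br (Fin.cons v x) + v * br (Fin.cons u x))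
    (I J : Submodule F P)
    (hI : IsPoissonIdeal F (⇑br) I) (hJ : IsPoissonIdeal F (⇑br) J)
    (hIs : ∃ s, dsI F (⇑br) I s = ⊥) (hJs : ∃ t, dsI F (⇑br) J t = ⊥) :
    IsPoissonIdeal F (⇑br) (I ⊔ J) ∧ ∃ u, dsI F (⇑br) (I ⊔ J) u = ⊥ := by
  constructor
  · constructor
    · intro a ha p
      obtain ⟨i, hi, j, hj, rfl⟩ := Submodule.mem_sup.1 ha
      rw [add_mul]
      exact Submodule.add_mem _ (Submodule.mem_sup_left (hI.1 _ hi _))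
        (Submodule.mem_sup_right (hJ.1 _ hj _))
    · intro x hx
      obtain ⟨i, hi, j, hj, hsum⟩ := Submodule.mem_sup.1 hx
      have ex : x = Function.update x 0 (i + j) := by
        rw [hsum, Function.update_eq_self]
      have : br x = br (Function.update x 0 i) + br (Function.update x 0 j) := by
        conv_lhs => rw [ex]
        exact br.map_update_add x 0 i j
      rw [this]
      refine Submodule.add_mem _
        (Submodule.mem_sup_left (hI.2 _ ?_)) (Submodule.mem_sup_right (hJ.2 _ ?_)) <;>
        rw [Function.update_self] <;> assumption
  · obtain ⟨s, hs⟩ := hIs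
    obtain ⟨t, ht⟩ := hJs
    refine ⟨s + t, le_bot_iff.1 ?_⟩
    rw [dsI_add]
    have h1 : dsI F (⇑br) (I ⊔ J) s ≤ J := by
      have := dsI_sup_le br hJ (I := I) s
      rwa [hs, bot_sup_eq] at this
    calc dsI F (⇑br) (dsI F (⇑br) (I ⊔ J) s) t
        ≤ dsI F (⇑br) J t := dsI_mono br h1 t
      _ = ⊥ := ht
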